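/- Let n ≥ 2, γ ∈ ℝ, and let U be a radially symmetric measurable function on ℝⁿ, U(x) = U(|x|). Then for any x ∈ ℝⁿ with r = |x| > 0, the convolution (|·|^{-γ} * U)(x) = (2^{3-n} ω_{n-1}/r^{n-2}) ∫_0^∞ ρ U(ρ) {∫_{|ρ-r|}^{ρ+r} η^{1-γ} h(η,ρ,r) dη} dρ, where h(η,ρ,r) = {η²-(ρ-r)²}^{(n-3)/2}{(ρ+r)²-η²}^{(n-3)/2}, provided both sides are finite. -/

import Mathlib

/-!
Write the integrand as `f(|x - y|, |y|)`, rotate `x` to `r e₀` with `r = |x|` and split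
`y = (t, w) ∈ ℝ × ℝ^{n-1}`. The integrand then depends only on `(t, |w|)`, so polar coordinates in `ℝ^{n-1}` give
`ω_{n-1} ∫_ℝ ∫_{s>0} s^{n-2} f(|(r - t, s)|, |(t, s)|) ds dt`. The bipolar coordinates
`ρ = |(t, s)|`, `η = |(r - t, s)|` map the half-plane `s > 0` onto `|ρ - r| < η < ρ + r`, with
`dt ds = ρη / (r s) dρ dη` and `2 r s = √((η² - (ρ - r)²)((ρ + r)² - η²))`; hence
`s^{n-2} dt ds = 2^{3-n} r^{2-n} ρ η h(η, ρ, r) dρ dη`.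
-/

open Real MeasureTheory intervalIntegral

/-- The measure of the unit sphere in `ℝ^{n-1}`. -/
noncomputable def omegaMinus (n : ℕ) : ℝ :=
  2 * Real.pi ^ (((n : ℝ) - 1) / 2) / Real.Gamma (((n : ℝ) - 1) / 2)

/-- The kernel `h(η,ρ,r)` from John's spherical means identity. -/
noncomputable def hKer (n : ℕ) (η ρ r : ℝ) : ℝ :=
  (η ^ 2 - (ρ - r) ^ 2) ^ (((n : ℝ) - 3) / 2) * ((ρ + r) ^ 2 - η ^ 2) ^ (((n : ℝ) - 3) / 2)

open Set Metric

section Bipolar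

variable {r : ℝ} {F : Type*} [NormedAddCommGroup F] [NormedSpace ℝ F]

def bipolarDomain (r : ℝ) : Set (ℝ × ℝ) := {p | 0 < p.1 ∧ |p.1 - r| < p.2 ∧ p.2 < p.1 + r}

noncomputable def bipolarAbscissa (r : ℝ) (p : ℝ × ℝ) : ℝ := (r ^ 2 + p.1 ^ 2 - p.2 ^ 2) / (2 * r)

noncomputable def bipolarHeight (r : ℝ) (p : ℝ × ℝ) : ℝ := √(p.1 ^ 2 - bipolarAbscissa r p ^ 2)

/-- `(ρ, η) ↦ (t, s)`, the point of the upper half-plane at distance `ρ` from `0` and at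
distance `η` from `(r, 0)`. -/
noncomputable def bipolarMap (r : ℝ) (p : ℝ × ℝ) : ℝ × ℝ := (bipolarAbscissa r p, bipolarHeight r p)

noncomputable def bipolarJacobian (r : ℝ) (p : ℝ × ℝ) : ℝ := p.1 * p.2 / (r * bipolarHeight r p)

noncomputable def bipolarMapInv (r : ℝ) (q : ℝ × ℝ) : ℝ × ℝ :=
  (√(q.1 ^ 2 + q.2 ^ 2), √((r - q.1) ^ 2 + q.2 ^ 2))

theorem measurableSet_bipolarDomain (r : ℝ) : MeasurableSet (bipolarDomain r) :=
  (measurableSet_lt measurable_const measurable_fst).inter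
    ((measurableSet_lt (measurable_fst.sub measurable_const).abs measurable_snd).inter
      (measurableSet_lt measurable_snd (measurable_fst.add measurable_const)))

theorem continuous_bipolarMapInv (r : ℝ) : Continuous (bipolarMapInv r) := by
  unfold bipolarMapInv
  fun_prop

theorem sq_sub_bipolarAbscissa_sq (hr : r ≠ 0) (p : ℝ × ℝ) :
    p.1 ^ 2 - bipolarAbscissa r p ^ 2 =
      (p.2 ^ 2 - (p.1 - r) ^ 2) * ((p.1 + r) ^ 2 - p.2 ^ 2) / (2 * r) ^ 2 := by
  unfold bipolarAbscissa
  field_simp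
  ring

theorem sq_sub_sq_pos_of_mem_bipolarDomain {p : ℝ × ℝ} (hp : p ∈ bipolarDomain r) :
    0 < p.2 ^ 2 - (p.1 - r) ^ 2 ∧ 0 < (p.1 + r) ^ 2 - p.2 ^ 2 := by
  obtain ⟨hρ, hlow, hup⟩ := hp
  have hη : 0 < p.2 := (abs_nonneg _).trans_lt hlow
  exact ⟨by nlinarith [sq_abs (p.1 - r), abs_nonneg (p.1 - r)], by nlinarith⟩

theorem bipolarHeight_sq (hr : r ≠ 0) {p : ℝ × ℝ} (hp : p ∈ bipolarDomain r) :
    bipolarHeight r p ^ 2 =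
      (p.2 ^ 2 - (p.1 - r) ^ 2) * ((p.1 + r) ^ 2 - p.2 ^ 2) / (2 * r) ^ 2 := by
  obtain ⟨hA, hB⟩ := sq_sub_sq_pos_of_mem_bipolarDomain hp
  rw [bipolarHeight, sq_sqrt (by rw [sq_sub_bipolarAbscissa_sq hr]; positivity),
    sq_sub_bipolarAbscissa_sq hr]

theorem bipolarHeight_pos (hr : r ≠ 0) {p : ℝ × ℝ} (hp : p ∈ bipolarDomain r) :
    0 < bipolarHeight r p := by
  obtain ⟨hA, hB⟩ := sq_sub_sq_pos_of_mem_bipolarDomain hp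
  rw [bipolarHeight, Real.sqrt_pos, sq_sub_bipolarAbscissa_sq hr]
  positivity

theorem bipolarMapInv_bipolarMap (hr : r ≠ 0) {p : ℝ × ℝ} (hp : p ∈ bipolarDomain r) :
    bipolarMapInv r (bipolarMap r p) = p := by
  have hρ : bipolarAbscissa r p ^ 2 + bipolarHeight r p ^ 2 = p.1 ^ 2 := by
    rw [bipolarHeight_sq hr hp, ← sq_sub_bipolarAbscissa_sq hr]
    ring
  have hη : (r - bipolarAbscissa r p) ^ 2 + bipolarHeight r p ^ 2 = p.2 ^ 2 := by
    rw [bipolarHeight_sq hr hp, bipolarAbscissa]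
    field_simp
    ring
  rw [bipolarMapInv, bipolarMap, hρ, hη, sqrt_sq hp.1.le, sqrt_sq ((abs_nonneg _).trans hp.2.1.le)]

theorem bipolarMap_bipolarMapInv (hr : r ≠ 0) {q : ℝ × ℝ} (hq : 0 < q.2) :
    bipolarMap r (bipolarMapInv r q) = q := by
  have ht : bipolarAbscissa r (bipolarMapInv r q) = q.1 := by
    rw [bipolarAbscissa, bipolarMapInv, sq_sqrt (by positivity), sq_sqrt (by positivity)]
    field_simp
    ring
  rw [bipolarMap, bipolarHeight, ht, bipolarMapInv, sq_sqrt (by positivity), add_sub_cancel_left,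
    sqrt_sq hq.le]

theorem bipolarMapInv_mem_bipolarDomain (hr : 0 < r) {q : ℝ × ℝ} (hq : 0 < q.2) :
    bipolarMapInv r q ∈ bipolarDomain r := by
  obtain ⟨t, s⟩ := q
  set ρ := √(t ^ 2 + s ^ 2)
  set η := √((r - t) ^ 2 + s ^ 2)
  have hρ2 : ρ ^ 2 = t ^ 2 + s ^ 2 := sq_sqrt (by positivity)
  have hη2 : η ^ 2 = (r - t) ^ 2 + s ^ 2 := sq_sqrt (by positivity)
  have hη : 0 ≤ η := sqrt_nonneg _
  have htρ : |t| < ρ := by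
    rw [← sqrt_sq_eq_abs]
    exact sqrt_lt_sqrt (sq_nonneg t) (by simp only at hq; nlinarith)
  obtain ⟨hlt, hgt⟩ := abs_lt.1 htρ
  show 0 < ρ ∧ |ρ - r| < η ∧ η < ρ + r
  refine ⟨(abs_nonneg t).trans_lt htρ, abs_lt_of_sq_lt_sq (by nlinarith) hη, ?_⟩
  exact (pow_lt_pow_iff_left₀ hη (by linarith [abs_nonneg t]) two_ne_zero).1 (by nlinarith)

theorem bijOn_bipolarMap (hr : 0 < r) :
    BijOn (bipolarMap r) (bipolarDomain r) (univ ×ˢ Ioi 0) :=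
  InvOn.bijOn ⟨fun _ hp => bipolarMapInv_bipolarMap hr.ne' hp,
      fun _ hq => bipolarMap_bipolarMapInv hr.ne' hq.2⟩
    (fun _ hp => ⟨trivial, bipolarHeight_pos hr.ne' hp⟩)
    (fun _ hq => bipolarMapInv_mem_bipolarDomain hr hq.2)

theorem ContinuousLinearMap.det_prod_fin_two (L M : ℝ × ℝ →L[ℝ] ℝ) :
    (L.prod M).det = L (1, 0) * M (0, 1) - L (0, 1) * M (1, 0) := by
  rw [ContinuousLinearMap.det, ← LinearMap.det_toMatrix (Module.Basis.finTwoProd ℝ),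
    Matrix.det_fin_two]
  simp [LinearMap.toMatrix_apply]

theorem exists_hasFDerivAt_bipolarMap (hr : r ≠ 0) {p : ℝ × ℝ} (hp : p ∈ bipolarDomain r) :
    ∃ L : ℝ × ℝ →L[ℝ] ℝ × ℝ, HasFDerivAt (bipolarMap r) L p ∧
      L.det = bipolarJacobian r p := by
  have hT := ((((hasFDerivAt_fst (𝕜 := ℝ) (p := p)).pow 2).const_add (r ^ 2)).sub
    ((hasFDerivAt_snd (𝕜 := ℝ) (p := p)).pow 2)).mul_const (2 * r)⁻¹
  replace hT : HasFDerivAt (bipolarAbscissa r) _ p := hT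
  have hS := ((hasFDerivAt_fst.pow 2).sub (hT.pow 2)).sqrt
    (Real.sqrt_pos.1 (bipolarHeight_pos hr hp)).ne'
  refine ⟨_, hT.prodMk hS, ?_⟩
  rw [ContinuousLinearMap.det_prod_fin_two, bipolarJacobian, bipolarHeight]
  simp only [mul_inv_rev, Nat.add_one_sub_one, pow_one, nsmul_eq_mul, Nat.cast_ofNat, smul_apply,
    sub_apply, ContinuousLinearMap.coe_fst', smul_eq_mul, mul_one, ContinuousLinearMap.coe_snd',
    mul_zero, sub_zero, Pi.sub_apply, one_div, zero_sub, mul_neg, sub_neg_eq_add, zero_add, neg_mul]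
  field_simp
  ring

theorem abs_det_fderiv_bipolarMap (hr : 0 < r) {p : ℝ × ℝ} (hp : p ∈ bipolarDomain r) :
    |(fderiv ℝ (bipolarMap r) p).det| = bipolarJacobian r p := by
  obtain ⟨L, hL, hdet⟩ := exists_hasFDerivAt_bipolarMap hr.ne' hp
  have := bipolarHeight_pos hr.ne' hp
  have := hp.1
  have := (abs_nonneg _).trans_lt hp.2.1
  rw [hL.fderiv, hdet, bipolarJacobian, abs_of_pos (by positivity)]

theorem hasFDerivWithinAt_bipolarMap (hr : 0 < r) :
    ∀ p ∈ bipolarDomain r,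
      HasFDerivWithinAt (bipolarMap r) (fderiv ℝ (bipolarMap r) p) (bipolarDomain r) p :=
  fun _ hp => (exists_hasFDerivAt_bipolarMap hr.ne' hp).elim
    fun _ hL => hL.1.differentiableAt.hasFDerivAt.hasFDerivWithinAt

theorem volume_prod_restrict_Ioi :
    (volume : Measure ℝ).prod (volume.restrict (Ioi 0)) =
      volume.restrict (univ ×ˢ Ioi (0 : ℝ)) := by
  rw [Measure.volume_eq_prod, ← Measure.prod_restrict, Measure.restrict_univ]

theorem integral_eq_setIntegral_bipolarDomain (hr : 0 < r) (g : ℝ × ℝ → F) :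
    ∫ q, g q ∂(volume.prod (volume.restrict (Ioi 0))) = ∫ p in bipolarDomain r,
      bipolarJacobian r p • g (bipolarMap r p) := by
  rw [volume_prod_restrict_Ioi, ← (bijOn_bipolarMap hr).image_eq,
    integral_image_eq_integral_abs_det_fderiv_smul volume (measurableSet_bipolarDomain r)
      (hasFDerivWithinAt_bipolarMap hr) (bijOn_bipolarMap hr).injOn]
  exact setIntegral_congr_fun (measurableSet_bipolarDomain r) fun p hp => by
    rw [abs_det_fderiv_bipolarMap hr hp]

theorem integrable_iff_integrableOn_bipolarDomain (hr : 0 < r) (g : ℝ × ℝ → F) :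
    Integrable g (volume.prod (volume.restrict (Ioi 0))) ↔ IntegrableOn
      (fun p => bipolarJacobian r p • g (bipolarMap r p)) (bipolarDomain r) := by
  rw [volume_prod_restrict_Ioi, ← IntegrableOn, ← (bijOn_bipolarMap hr).image_eq,
    integrableOn_image_iff_integrableOn_abs_det_fderiv_smul volume
      (measurableSet_bipolarDomain r) (hasFDerivWithinAt_bipolarMap hr) (bijOn_bipolarMap hr).injOn]
  exact integrableOn_congr_fun (fun p hp => by rw [abs_det_fderiv_bipolarMap hr hp])
    (measurableSet_bipolarDomain r)

theorem bipolarJacobian_mul_bipolarHeight_pow (hr : 0 < r) {p : ℝ × ℝ}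
    (hp : p ∈ bipolarDomain r) (m : ℕ) :
    bipolarJacobian r p * bipolarHeight r p ^ m =
      2 ^ (1 - (m : ℝ)) / r ^ m * (p.1 * p.2 * hKer (m + 2) p.2 p.1 r) := by
  obtain ⟨hA, hB⟩ := sq_sub_sq_pos_of_mem_bipolarDomain hp
  have hs := bipolarHeight_pos hr.ne' hp
  have hker : hKer (m + 2) p.2 p.1 r = ((p.2 ^ 2 - (p.1 - r) ^ 2) * ((p.1 + r) ^ 2 - p.2 ^ 2)) ^
      (((m : ℝ) - 1) / 2) := by
    rw [hKer, mul_rpow hA.le hB.le]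
    push_cast
    ring_nf
  have hpow : bipolarHeight r p ^ m / bipolarHeight r p =
      (bipolarHeight r p ^ 2) ^ (((m : ℝ) - 1) / 2) := by
    rw [← rpow_natCast, ← rpow_natCast, ← rpow_mul hs.le, ← rpow_sub_one hs.ne']
    push_cast
    ring_nf
  have h2r : ((2 * r) ^ 2) ^ (((m : ℝ) - 1) / 2) * r = 2 ^ ((m : ℝ) - 1) * r ^ m := by
    rw [← rpow_natCast, ← rpow_mul (by positivity), mul_rpow zero_le_two hr.le, mul_assoc,
      ← rpow_add_one hr.ne', ← rpow_natCast r m]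
    push_cast
    ring_nf
  rw [bipolarJacobian, show p.1 * p.2 / (r * bipolarHeight r p) * bipolarHeight r p ^ m =
      p.1 * p.2 * (bipolarHeight r p ^ m / bipolarHeight r p) / r by ring, hpow,
    bipolarHeight_sq hr.ne' hp, div_rpow (by positivity) (by positivity), hker, show (1 - (m : ℝ)) = -((m : ℝ) - 1) by ring,
    rpow_neg zero_le_two, eq_div_of_mul_eq (by positivity) h2r.symm]
  field_simp

theorem integral_fiber_bipolarDomain (hr : 0 ≤ r) (g : ℝ × ℝ → F) (ρ : ℝ) :
    ∫ η, (bipolarDomain r).indicator g (ρ, η) =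
      (Ioi 0).indicator (fun ρ => ∫ η in |ρ - r|..ρ + r, g (ρ, η)) ρ := by
  rcases lt_or_ge 0 ρ with hρ | hρ
  · have hfiber : Prod.mk ρ ⁻¹' bipolarDomain r = Ioo |ρ - r| (ρ + r) := by
      ext η
      simp [bipolarDomain, hρ]
    have hle : |ρ - r| ≤ ρ + r := abs_le.2 ⟨by linarith, by linarith⟩
    rw [indicator_of_mem (mem_Ioi.2 hρ), integral_of_le hle, integral_Ioc_eq_integral_Ioo,
      ← hfiber, ← MeasureTheory.integral_indicator
        (measurable_prodMk_left (measurableSet_bipolarDomain r))]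
    rfl
  · have hfiber : ∀ η, (ρ, η) ∉ bipolarDomain r := fun η hη => hρ.not_gt hη.1
    simp [indicator_of_notMem (hfiber _), hρ.not_gt]

theorem setIntegral_bipolarDomain (hr : 0 ≤ r) {g : ℝ × ℝ → F}
    (hg : IntegrableOn g (bipolarDomain r)) :
    ∫ p in bipolarDomain r, g p = ∫ ρ in Ioi 0, ∫ η in |ρ - r|..ρ + r, g (ρ, η) := by
  rw [← MeasureTheory.integral_indicator (measurableSet_bipolarDomain r), Measure.volume_eq_prod,
    integral_prod _ ((integrable_indicator_iff (measurableSet_bipolarDomain r)).2 hg),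
    ← MeasureTheory.integral_indicator measurableSet_Ioi]
  simp only [integral_fiber_bipolarDomain hr]

theorem integral_pow_smul_comp_bipolarMapInv (hr : 0 < r) (m : ℕ) {f : ℝ × ℝ → F}
    (hint : Integrable (fun q => q.2 ^ m • f (bipolarMapInv r q).swap)
      (volume.prod (volume.restrict (Ioi 0)))) :
    ∫ q, q.2 ^ m • f (bipolarMapInv r q).swap ∂(volume.prod (volume.restrict (Ioi 0))) =
      (2 ^ (1 - (m : ℝ)) / r ^ m) •
        ∫ ρ in Ioi 0, ∫ η in |ρ - r|..ρ + r, (ρ * η * hKer (m + 2) η ρ r) • f (η, ρ) := by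
  have hpt : ∀ p ∈ bipolarDomain r, bipolarJacobian r p •
      ((bipolarMap r p).2 ^ m • f (bipolarMapInv r (bipolarMap r p)).swap) =
      (2 ^ (1 - (m : ℝ)) / r ^ m) • ((p.1 * p.2 * hKer (m + 2) p.2 p.1 r) • f (p.2, p.1)) :=
    fun p hp => by
      rw [bipolarMapInv_bipolarMap hr.ne' hp, smul_smul, smul_smul, bipolarMap,
        bipolarJacobian_mul_bipolarHeight_pow hr hp]
      rfl
  have hD : IntegrableOn (fun p => (p.1 * p.2 * hKer (m + 2) p.2 p.1 r) • f (p.2, p.1))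
      (bipolarDomain r) := by
    have := (integrable_iff_integrableOn_bipolarDomain hr _).1 hint
    rwa [integrableOn_congr_fun hpt (measurableSet_bipolarDomain r), IntegrableOn,
      integrable_fun_smul_iff (by positivity)] at this
  rw [integral_eq_setIntegral_bipolarDomain hr,
    setIntegral_congr_fun (measurableSet_bipolarDomain r) hpt, MeasureTheory.integral_smul,
    setIntegral_bipolarDomain hr.le hD]

end Bipolar

section CylindricalCoordinates

variable {α E F : Type*} [MeasurableSpace α] {μ : Measure α}
  [NormedAddCommGroup E] [NormedSpace ℝ E] [FiniteDimensional ℝ E] [MeasurableSpace E]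
  [BorelSpace E] [Nontrivial E] {ν : Measure E} [ν.IsAddHaarMeasure]
  [NormedAddCommGroup F] [NormedSpace ℝ F]

theorem integrable_prod_comp_norm_iff {G : α × ℝ → F} (hG : StronglyMeasurable G) :
    Integrable (fun q : α × E => G (q.1, ‖q.2‖)) (μ.prod ν) ↔
      Integrable (fun p : α × ℝ => p.2 ^ (Module.finrank ℝ E - 1) • G p)
        (μ.prod (volume.restrict (Ioi 0))) := by
  have hc : (Module.finrank ℝ E • ν.real (ball 0 1)) ≠ 0 := by
    simp [Module.finrank_pos.ne', measureReal_def, ENNReal.toReal_eq_zero_iff,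
      (measure_ball_pos ν (0 : E) one_pos).ne', measure_ball_lt_top.ne]
  have hnorm : ∀ t, ∫ w, ‖G (t, ‖w‖)‖ ∂ν = (Module.finrank ℝ E • ν.real (ball 0 1)) •
      ∫ s in Ioi 0, ‖s ^ (Module.finrank ℝ E - 1) • G (t, s)‖ := fun t => by
    rw [integral_fun_norm_addHaar ν (fun s => ‖G (t, s)‖), smul_assoc]
    congr 2
    refine setIntegral_congr_fun measurableSet_Ioi fun s (hs : 0 < s) => ?_
    rw [norm_smul, norm_pow, Real.norm_of_nonneg hs.le, smul_eq_mul]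
  rw [integrable_prod_iff, integrable_prod_iff, funext hnorm, integrable_fun_smul_iff hc]
  · exact and_congr_left' (Filter.eventually_congr (.of_forall fun t =>
      integrable_fun_norm_addHaar ν (f := fun s => G (t, s))))
  · exact ((measurable_snd.pow_const _).stronglyMeasurable.smul hG).aestronglyMeasurable
  · exact (hG.comp_measurable (measurable_fst.prodMk measurable_snd.norm)).aestronglyMeasurable

theorem integral_prod_comp_norm [SFinite μ] {G : α × ℝ → F} (hG : StronglyMeasurable G)
    (hint : Integrable (fun q : α × E => G (q.1, ‖q.2‖)) (μ.prod ν)) :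
    ∫ q, G (q.1, ‖q.2‖) ∂(μ.prod ν) = (Module.finrank ℝ E • ν.real (ball 0 1)) •
      ∫ p, p.2 ^ (Module.finrank ℝ E - 1) • G p ∂(μ.prod (volume.restrict (Ioi 0))) := by
  rw [integral_prod _ hint, integral_prod _ ((integrable_prod_comp_norm_iff hG).1 hint),
    ← MeasureTheory.integral_smul]
  congr 1 with t
  rw [integral_fun_norm_addHaar ν (fun s => G (t, s)), smul_assoc]

end CylindricalCoordinates

theorem exists_linearIsometryEquiv_apply_eq {E : Type*} [NormedAddCommGroup E]
    [InnerProductSpace ℝ E] {x y : E} (h : ‖x‖ = ‖y‖) : ∃ R : E ≃ₗᵢ[ℝ] E, R y = x :=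
  ⟨Submodule.reflection (ℝ ∙ (y - x))ᗮ, Submodule.reflection_sub h.symm⟩

section Rotation

variable {E F : Type*} [NormedAddCommGroup E] [InnerProductSpace ℝ E] [FiniteDimensional ℝ E]
  [MeasurableSpace E] [BorelSpace E] [NormedAddCommGroup F]

theorem integrable_norm_sub_norm_congr {x y : E} (h : ‖x‖ = ‖y‖) (f : ℝ × ℝ → F) :
    Integrable (fun z => f (‖x - z‖, ‖z‖)) ↔ Integrable (fun z => f (‖y - z‖, ‖z‖)) := by
  obtain ⟨R, rfl⟩ := exists_linearIsometryEquiv_apply_eq h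
  have hR : ∀ z, f (‖R y - R z‖, ‖R z‖) = f (‖y - z‖, ‖z‖) := fun z => by
    rw [← map_sub, R.norm_map, R.norm_map]
  rw [← R.measurePreserving.integrable_comp_emb R.toHomeomorph.measurableEmbedding]
  simp only [Function.comp_def, hR]

variable [NormedSpace ℝ F]

theorem integral_norm_sub_norm_congr {x y : E} (h : ‖x‖ = ‖y‖) (f : ℝ × ℝ → F) :
    ∫ z, f (‖x - z‖, ‖z‖) = ∫ z, f (‖y - z‖, ‖z‖) := by
  obtain ⟨R, rfl⟩ := exists_linearIsometryEquiv_apply_eq h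
  have hR : ∀ z, f (‖R y - R z‖, ‖R z‖) = f (‖y - z‖, ‖z‖) := fun z => by
    rw [← map_sub, R.norm_map, R.norm_map]
  rw [← R.measurePreserving.integral_comp R.toHomeomorph.measurableEmbedding, funext hR]

end Rotation

section EuclideanCons

variable {n : ℕ} {F : Type*} [NormedAddCommGroup F]

noncomputable def euclideanConsEquiv (n : ℕ) :
    ℝ × EuclideanSpace ℝ (Fin n) ≃ᵐ EuclideanSpace ℝ (Fin (n + 1)) :=
  ((MeasurableEquiv.refl ℝ).prodCongr (MeasurableEquiv.toLp 2 (Fin n → ℝ)).symm).trans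
    ((MeasurableEquiv.piFinSuccAbove (fun _ => ℝ) 0).symm.trans (MeasurableEquiv.toLp 2 _))

theorem measurePreserving_euclideanConsEquiv (n : ℕ) :
    MeasurePreserving (euclideanConsEquiv n) := by
  refine (EuclideanSpace.volume_preserving_symm_measurableEquiv_toLp _).symm.comp
    ((volume_preserving_piFinSuccAbove (fun _ => ℝ) 0).symm.comp ?_)
  rw [Measure.volume_eq_prod, Measure.volume_eq_prod]
  exact (MeasurePreserving.id volume).prod
    (EuclideanSpace.volume_preserving_symm_measurableEquiv_toLp _)

theorem euclideanConsEquiv_apply (q : ℝ × EuclideanSpace ℝ (Fin n)) :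
    euclideanConsEquiv n q = WithLp.toLp 2 (Fin.cons q.1 q.2) := by
  ext i
  exact Fin.cases rfl (fun _ => rfl) i

theorem norm_euclideanConsEquiv (q : ℝ × EuclideanSpace ℝ (Fin n)) :
    ‖euclideanConsEquiv n q‖ = √(q.1 ^ 2 + ‖q.2‖ ^ 2) := by
  rw [EuclideanSpace.norm_eq, EuclideanSpace.norm_eq, sq_sqrt (by positivity),
    euclideanConsEquiv_apply, Fin.sum_univ_succ]
  simp

theorem euclideanConsEquiv_sub (q q' : ℝ × EuclideanSpace ℝ (Fin n)) :
    euclideanConsEquiv n q - euclideanConsEquiv n q' = euclideanConsEquiv n (q - q') := by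
  simp only [euclideanConsEquiv_apply, ← WithLp.toLp_sub]
  congr 1
  ext i
  refine Fin.cases ?_ (fun j => ?_) i <;> simp

theorem norm_sub_norm_euclideanConsEquiv (r : ℝ) (q : ℝ × EuclideanSpace ℝ (Fin n)) :
    (‖euclideanConsEquiv n (r, 0) - euclideanConsEquiv n q‖, ‖euclideanConsEquiv n q‖) =
      (bipolarMapInv r (q.1, ‖q.2‖)).swap := by
  rw [euclideanConsEquiv_sub, norm_euclideanConsEquiv, norm_euclideanConsEquiv]
  simp [bipolarMapInv]

theorem norm_euclideanConsEquiv_fst {r : ℝ} (hr : 0 ≤ r) :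
    ‖euclideanConsEquiv n (r, 0)‖ = r := by
  simp [norm_euclideanConsEquiv, sqrt_sq hr]

theorem integrable_norm_sub_norm_iff_prod (x : EuclideanSpace ℝ (Fin (n + 1))) (f : ℝ × ℝ → F) :
    Integrable (fun y => f (‖x - y‖, ‖y‖)) ↔
      Integrable fun q : ℝ × EuclideanSpace ℝ (Fin n) =>
        f (bipolarMapInv ‖x‖ (q.1, ‖q.2‖)).swap := by
  rw [integrable_norm_sub_norm_congr (norm_euclideanConsEquiv_fst (norm_nonneg x)).symm,
    ← (measurePreserving_euclideanConsEquiv n).integrable_comp_emb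
      (MeasurableEquiv.measurableEmbedding _)]
  simp only [Function.comp_def, norm_sub_norm_euclideanConsEquiv]

theorem integral_norm_sub_norm_eq_integral_prod [NormedSpace ℝ F]
    (x : EuclideanSpace ℝ (Fin (n + 1))) (f : ℝ × ℝ → F) :
    ∫ y, f (‖x - y‖, ‖y‖) =
      ∫ q : ℝ × EuclideanSpace ℝ (Fin n), f (bipolarMapInv ‖x‖ (q.1, ‖q.2‖)).swap := by
  rw [integral_norm_sub_norm_congr (norm_euclideanConsEquiv_fst (norm_nonneg x)).symm,
    ← (measurePreserving_euclideanConsEquiv n).integral_comp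
      (MeasurableEquiv.measurableEmbedding _)]
  simp only [norm_sub_norm_euclideanConsEquiv]

end EuclideanCons

theorem omegaMinus_eq (m : ℕ) :
    omegaMinus (m + 2) = (m + 1) * volume.real (ball (0 : EuclideanSpace ℝ (Fin (m + 1))) 1) := by
  have hm : ((m + 1 : ℕ) : ℝ) / 2 ≠ 0 := by positivity
  have hsqrt : √π ^ (m + 1) = π ^ (((m + 1 : ℕ) : ℝ) / 2) := by
    rw [sqrt_eq_rpow, ← rpow_natCast, ← rpow_mul pi_pos.le, one_div_mul_eq_div]
  rw [measureReal_def, EuclideanSpace.volume_ball, Fintype.card_fin, ENNReal.ofReal_one, one_pow,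
    one_mul, ENNReal.toReal_ofReal (by positivity), Gamma_add_one hm, hsqrt, omegaMinus]
  push_cast
  rw [show ((m : ℝ) + 2 - 1) / 2 = ((m : ℝ) + 1) / 2 by ring]
  have := (Gamma_pos_of_pos (by positivity : (0 : ℝ) < ((m : ℝ) + 1) / 2)).ne'
  field_simp

theorem integral_norm_sub_norm_eq_bipolar {F : Type*} [NormedAddCommGroup F] [NormedSpace ℝ F]
    (m : ℕ) {f : ℝ × ℝ → F} (hf : StronglyMeasurable f)
    {x : EuclideanSpace ℝ (Fin (m + 2))} (hx : x ≠ 0)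
    (hint : Integrable fun y => f (‖x - y‖, ‖y‖)) :
    ∫ y, f (‖x - y‖, ‖y‖) = (2 ^ (1 - (m : ℝ)) * omegaMinus (m + 2) / ‖x‖ ^ m) •
      ∫ ρ in Ioi 0, ∫ η in |ρ - ‖x‖|..ρ + ‖x‖, (ρ * η * hKer (m + 2) η ρ ‖x‖) • f (η, ρ) := by
  have hG : StronglyMeasurable fun q => f (bipolarMapInv ‖x‖ q).swap :=
    hf.comp_measurable (measurable_swap.comp (continuous_bipolarMapInv _).measurable)
  rw [integrable_norm_sub_norm_iff_prod, Measure.volume_eq_prod] at hint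
  have hcyl := (integrable_prod_comp_norm_iff hG).1 hint
  rw [finrank_euclideanSpace_fin, Nat.add_sub_cancel] at hcyl
  rw [integral_norm_sub_norm_eq_integral_prod, Measure.volume_eq_prod,
    integral_prod_comp_norm hG hint, finrank_euclideanSpace_fin, Nat.add_sub_cancel,
    integral_pow_smul_comp_bipolarMapInv (norm_pos_iff.2 hx) m hcyl, smul_smul, omegaMinus_eq]
  congr 1
  ring

theorem stmt_15_general (n : ℕ) (hn : 2 ≤ n) (γ : ℝ) (U : ℝ → ℝ) (hU : Measurable U)
    (x : EuclideanSpace ℝ (Fin n)) (hx : 0 < ‖x‖)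
    (hL : Integrable (fun y : EuclideanSpace ℝ (Fin n) => ‖x - y‖ ^ (-γ) * U ‖y‖)) :
    (∫ y : EuclideanSpace ℝ (Fin n), ‖x - y‖ ^ (-γ) * U ‖y‖) =
      2 ^ (3 - (n : ℝ)) * omegaMinus n / ‖x‖ ^ ((n : ℝ) - 2) *
        ∫ ρ in Set.Ioi (0 : ℝ),
          ρ * U ρ * ∫ η in |ρ - ‖x‖|..(ρ + ‖x‖), η ^ (1 - γ) * hKer n η ρ ‖x‖ := by
  obtain ⟨m, rfl⟩ : ∃ m, n = m + 2 := ⟨n - 2, by omega⟩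
  have hf : StronglyMeasurable fun p : ℝ × ℝ => p.1 ^ (-γ) * U p.2 :=
    ((measurable_fst.pow_const _).mul (hU.comp measurable_snd)).stronglyMeasurable
  rw [show (∫ y, ‖x - y‖ ^ (-γ) * U ‖y‖) = _ from
    integral_norm_sub_norm_eq_bipolar m hf (norm_pos_iff.1 hx) hL, smul_eq_mul]
  congr 1
  · push_cast
    rw [show (3 : ℝ) - (m + 2) = 1 - m by ring, show (m : ℝ) + 2 - 2 = m by ring, rpow_natCast]
  · refine setIntegral_congr_fun measurableSet_Ioi fun ρ (hρ : 0 < ρ) => ?_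
    rw [← intervalIntegral.integral_const_mul]
    -- `η ^ (1 - γ) = η * η ^ (-γ)` fails at `η = 0` when `γ = 1`, but `η > 0` inside the interval.
    refine intervalIntegral.integral_congr_ae (.of_forall fun η hη => ?_)
    have hη : 0 < η := lt_of_le_of_lt (le_min (abs_nonneg _) (by positivity)) hη.1
    rw [smul_eq_mul, sub_eq_add_neg, rpow_add hη, rpow_one]
    ring

theorem stmt_15 (n : ℕ) (hn : 2 ≤ n) (γ : ℝ) (U : ℝ → ℝ) (hU : Measurable U)
    (x : EuclideanSpace ℝ (Fin n)) (hx : 0 < ‖x‖)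
    (hL : Integrable (fun y : EuclideanSpace ℝ (Fin n) => ‖x - y‖ ^ (-γ) * U ‖y‖))
    (hR : IntegrableOn
      (fun ρ : ℝ => ρ * U ρ * ∫ η in |ρ - ‖x‖|..(ρ + ‖x‖), η ^ (1 - γ) * hKer n η ρ ‖x‖)
      (Set.Ioi (0 : ℝ))) :
    (∫ y : EuclideanSpace ℝ (Fin n), ‖x - y‖ ^ (-γ) * U ‖y‖) =
      2 ^ (3 - (n : ℝ)) * omegaMinus n / ‖x‖ ^ ((n : ℝ) - 2) *
        ∫ ρ in Set.Ioi (0 : ℝ),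
          ρ * U ρ * ∫ η in |ρ - ‖x‖|..(ρ + ‖x‖), η ^ (1 - γ) * hKer n η ρ ‖x‖ :=
  stmt_15_general n hn γ U hU x hx hL
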